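/- arXiv:math/0607757 — 2 statements merged into one kernel-verified Lean document; each statement's English description precedes it below -/
import Mathlib

section
/- Fix integers 1 ≤ ℓ ≤ d and reals b_1 > b_2 > ⋯ > b_d > 0, and let M be an ℓ×d complex matrix. Let I ⊆ {1,…,d} be an ℓ-element subset such that the columns {M^i : i ∈ I} are linearly independent (ω_M(I) ≠ 0) and such that ω_M(J) = 0 for every ℓ-element subset J with p_J > p_I. Then ω_M(J) = 0 for every ℓ-element subset J with J ≺ I in the lexicographic order. -/
/-- The minor `ω_M(I)` of an `ℓ×d` matrix `M`: the determinant of the `ℓ×ℓ` submatrix of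
`M` whose columns are those indexed by `I`, taken in increasing order (defined to be `0`
when `I` does not have `ℓ` elements). -/
noncomputable def minorOn {ℓ d : ℕ} (M : Matrix (Fin ℓ) (Fin d) ℂ)
    (I : Finset (Fin d)) : ℂ :=
  if h : I.card = ℓ then
    (M.submatrix id (fun t : Fin ℓ => ((I.orderIsoOfFin h t) : Fin d))).det
  else 0

/-! If `J ≺ I` first differs from `I` at position `s`, put `j = j_s`. Every `i ∈ I` with
`i ≤ j` already lies in `J ∖ {j}`, so independence of the columns of `J` forces the expansion
of `M^j` in the basis `{M^i : i ∈ I}` to use some `M^i` with `i > j`. Exchanging `i` for `j`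
gives an `ℓ`-set `K` whose columns still span `ℂ^ℓ`, so `ω_M(K) ≠ 0`, while
`p_K = p_I · b_j / b_i > p_I`. -/

open Finset Submodule Module

section Exchange

variable {K V ι : Type*} [DivisionRing K] [AddCommGroup V] [Module K V] [DecidableEq ι]

theorem Submodule.exists_span_image_le_span_image_insert_erase {v : ι → V} {I P : Finset ι}
    {j : ι} (hj : v j ∈ span K (v '' I)) (hjP : v j ∉ span K (v '' P)) :
    ∃ i ∈ I, i ∉ P ∧ span K (v '' I) ≤ span K (v '' ↑(insert j (I.erase i))) := by
  obtain ⟨c, hc⟩ := (mem_span_image_finset_iff_exists_fun' K).1 hj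
  obtain ⟨i, hiI, hiP, hci⟩ : ∃ i ∈ I, i ∉ P ∧ c i ≠ 0 := by
    by_contra! h
    refine hjP (hc ▸ sum_mem fun k hk => ?_)
    by_cases hkP : k ∈ P
    · exact smul_mem _ _ (subset_span (Set.mem_image_of_mem v hkP))
    · simp [h k hk hkP]
  have hmem : ∀ k ∈ insert j (I.erase i), v k ∈ span K (v '' ↑(insert j (I.erase i))) :=
    fun k hk => subset_span ⟨k, hk, rfl⟩
  refine ⟨i, hiI, hiP, span_le.2 ?_⟩
  rintro _ ⟨k, hk, rfl⟩
  obtain rfl | hki := eq_or_ne k i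
  · have hsolve : c k • v k = v j - ∑ l ∈ I.erase k, c l • v l := by
      rw [← hc, ← add_sum_erase I _ hiI]
      abel
    refine (smul_mem_iff _ hci).1 ?_
    rw [hsolve]
    exact sub_mem (hmem j (mem_insert_self _ _))
      (sum_mem fun l hl => smul_mem _ _ (hmem l (mem_insert_of_mem hl)))
  · exact hmem k (mem_insert_of_mem (mem_erase.2 ⟨hki, hk⟩))

theorem LinearIndepOn.notMem_span_image_erase {v : ι → V} {J : Finset ι} {j : ι}
    (hJ : LinearIndepOn K v J) (hj : j ∈ J) : v j ∉ span K (v '' ↑(J.erase j)) := by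
  rw [← insert_erase hj, coe_insert] at hJ
  exact (hJ.mono (Set.subset_insert _ _)).notMem_span_iff.2 ⟨hJ, by simp⟩

end Exchange

theorem Finset.filter_le_subset_erase_of_lex {α : Type*} [LinearOrder α] {ℓ : ℕ}
    {I J : Finset α} (hI : #I = ℓ) (hJ : #J = ℓ) {s : Fin ℓ}
    (hagree : ∀ t < s, J.orderEmbOfFin hJ t = I.orderEmbOfFin hI t)
    (hlt : J.orderEmbOfFin hJ s < I.orderEmbOfFin hI s) :
    {i ∈ I | i ≤ J.orderEmbOfFin hJ s} ⊆ J.erase (J.orderEmbOfFin hJ s) := by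
  intro x hx
  rw [mem_filter, ← mem_coe, ← range_orderEmbOfFin I hI] at hx
  obtain ⟨⟨t, rfl⟩, hts⟩ := hx
  have hts : t < s := by
    by_contra! h
    exact (hlt.trans_le ((I.orderEmbOfFin hI).monotone h)).not_ge hts
  rw [← hagree t hts]
  exact mem_erase.2 ⟨(J.orderEmbOfFin hJ).injective.ne hts.ne, J.orderEmbOfFin_mem hJ t⟩

theorem Finset.prod_lt_prod_insert_erase {ι R : Type*} [DecidableEq ι] [CommSemiring R]
    [PartialOrder R] [IsStrictOrderedRing R] {b : ι → R} {I : Finset ι} {i j : ι}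
    (hi : i ∈ I) (hj : j ∉ I) (hb : b i < b j) (hpos : ∀ k ∈ I.erase i, 0 < b k) :
    ∏ k ∈ I, b k < ∏ k ∈ insert j (I.erase i), b k := by
  rw [prod_insert fun h => hj (mem_of_mem_erase h), ← mul_prod_erase I b hi]
  exact mul_lt_mul_of_pos_right hb (prod_pos hpos)

section Minor

variable {ℓ d : ℕ} (M : Matrix (Fin ℓ) (Fin d) ℂ) {S : Finset (Fin d)}

theorem minorOn_ne_zero_iff_linearIndependent (hS : #S = ℓ) :
    minorOn M S ≠ 0 ↔ LinearIndependent ℂ (M.col ∘ S.orderEmbOfFin hS) := by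
  rw [minorOn, dif_pos hS, ← isUnit_iff_ne_zero, ← Matrix.isUnit_iff_isUnit_det,
    ← Matrix.linearIndependent_cols_iff_isUnit]
  rfl

theorem minorOn_ne_zero_iff_linearIndepOn (hS : #S = ℓ) :
    minorOn M S ≠ 0 ↔ LinearIndepOn ℂ M.col S := by
  rw [minorOn_ne_zero_iff_linearIndependent M hS,
    ← linearIndepOn_range_iff (S.orderEmbOfFin hS).injective, range_orderEmbOfFin]

theorem minorOn_ne_zero_iff_top_le_span (hS : #S = ℓ) :
    minorOn M S ≠ 0 ↔ ⊤ ≤ span ℂ (M.col '' S) := by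
  have hcard : Fintype.card (Fin ℓ) = finrank ℂ (Fin ℓ → ℂ) := by simp
  rw [minorOn_ne_zero_iff_linearIndependent M hS, ← range_orderEmbOfFin S hS, ← Set.range_comp]
  exact ⟨fun h => (h.span_eq_top_of_card_eq_finrank' hcard).ge,
    fun h => linearIndependent_of_top_le_span_of_card_eq_finrank h hcard⟩

end Minor

theorem stmt7_general (ℓ d : ℕ)
    (b : Fin d → ℝ) (hb : StrictAnti b) (hbpos : ∀ i, 0 < b i)
    (M : Matrix (Fin ℓ) (Fin d) ℂ)
    (I : Finset (Fin d)) (hI : I.card = ℓ)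
    (hIne : minorOn M I ≠ 0)
    (hvanish : ∀ J : Finset (Fin d), J.card = ℓ →
      (∏ i ∈ I, b i) < ∏ i ∈ J, b i → minorOn M J = 0) :
    ∀ (J : Finset (Fin d)) (hJ : J.card = ℓ),
      (∃ s : Fin ℓ,
        (∀ t : Fin ℓ, t < s →
          ((J.orderIsoOfFin hJ t : Fin d) = (I.orderIsoOfFin hI t : Fin d))) ∧
        ((J.orderIsoOfFin hJ s : Fin d) < (I.orderIsoOfFin hI s : Fin d))) →
      minorOn M J = 0 := by
  rintro J hJ ⟨s, hagree, hlt⟩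
  simp only [coe_orderIsoOfFin_apply] at hagree hlt
  set j := J.orderEmbOfFin hJ s
  by_contra hJne
  have hprefix := filter_le_subset_erase_of_lex hI hJ hagree hlt
  have hjI : j ∉ I := fun h => (mem_erase.1 (hprefix (mem_filter.2 ⟨h, le_rfl⟩))).1 rfl
  have hjP : M.col j ∉ span ℂ (M.col '' ↑{i ∈ I | i ≤ j}) := by
    have hJind := (minorOn_ne_zero_iff_linearIndepOn M hJ).1 hJne
    exact fun h => hJind.notMem_span_image_erase (J.orderEmbOfFin_mem hJ s)
      (span_mono (Set.image_mono (coe_subset.2 hprefix)) h)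
  have hIspan := (minorOn_ne_zero_iff_top_le_span M hI).1 hIne
  obtain ⟨i, hiI, hij, hspan⟩ :=
    exists_span_image_le_span_image_insert_erase (hIspan trivial) hjP
  have hji : j < i := by simpa [hiI] using hij
  have hK : #(insert j (I.erase i)) = ℓ := by
    rw [card_insert_of_notMem fun h => hjI (mem_of_mem_erase h), card_erase_add_one hiI, hI]
  exact (minorOn_ne_zero_iff_top_le_span M hK).2 (hIspan.trans hspan)
    (hvanish _ hK (prod_lt_prod_insert_erase hiI hjI (hb hji) fun k _ => hbpos k))

/-- **Corollary B.6.** Fix `b_1 > ⋯ > b_d > 0` and an `ℓ×d` complex matrix `M`. Let `I`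
be an `ℓ`-element subset with `ω_M(I) ≠ 0` and `ω_M(J) = 0` whenever `p_J > p_I`. Then
`ω_M(J) = 0` for every `ℓ`-element subset `J` lexicographically smaller than `I`. -/
theorem stmt7 (ℓ d : ℕ) (hℓ1 : 1 ≤ ℓ) (hℓd : ℓ ≤ d)
    (b : Fin d → ℝ) (hb : StrictAnti b) (hbpos : ∀ i, 0 < b i)
    (M : Matrix (Fin ℓ) (Fin d) ℂ)
    (I : Finset (Fin d)) (hI : I.card = ℓ)
    (hIne : minorOn M I ≠ 0)
    (hvanish : ∀ J : Finset (Fin d), J.card = ℓ →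
      (∏ i ∈ I, b i) < ∏ i ∈ J, b i → minorOn M J = 0) :
    ∀ (J : Finset (Fin d)) (hJ : J.card = ℓ),
      (∃ s : Fin ℓ,
        (∀ t : Fin ℓ, t < s →
          ((J.orderIsoOfFin hJ t : Fin d) = (I.orderIsoOfFin hI t : Fin d))) ∧
        ((J.orderIsoOfFin hJ s : Fin d) < (I.orderIsoOfFin hI s : Fin d))) →
      minorOn M J = 0 :=
  stmt7_general ℓ d b hb hbpos M I hI hIne hvanish
end

section
/- Let Σ = ℕ^ℕ with the one-sided shift σ, let μ be a σ-invariant Borel probability on Σ admitting a Jacobian Jσ, and let Σ̂ = ℕ^ℤ with the two-sided shift σ̂. Let μ̂ be a σ̂-invariant Borel probability on Σ̂ with P_*μ̂ = μ, and let x ↦ μ̂_x be a disintegration of μ̂ over μ along P: a family of Borel probabilities on Σ (the past space, via S) such that (h_*μ̂)(E) = ∫_Σ μ̂_x({s ∈ Σ : (s,x) ∈ E}) dμ(x) for every Borel set E ⊆ Σ × Σ. Then for μ-almost every x ∈ Σ the following holds for every n ≥ 1 and every word v = (v_0,…,v_{n−1}) ∈ ℕ^n: μ̂_x({s ∈ Σ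 : s(k) = v_k for all 0 ≤ k < n}) = 1/Jσ^n(x^n), where x^n ∈ Σ is defined by x^n(j) = v_{n−1−j} for 0 ≤ j < n and x^n(j) = x(j−n) for j ≥ n. -/
/-!
Invariance of `μ̂` under `σ̂ⁿ` turns the past cylinder `[v] × B` into the set of futures
`{xⁿ : x ∈ B}`, whose `μ`-measure is `∫_B 1 / Jσⁿ(xⁿ) dμ` by the change of variables along the
inverse branches of `σ`. The disintegration then says that `x ↦ μ̂_x([v])` and `x ↦ 1 / Jσⁿ(xⁿ)`
have the same integral over every Borel set. As `x ↦ μ̂_x([v])` is not assumed measurable, this is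
upgraded to a.e. equality by comparing measurable minorants of `μ̂_x([v])` and of `1 - μ̂_x([v])`.
-/

open MeasureTheory

/-- The one-sided shift on `Σ = ℕ^ℕ`. -/
def shiftMap : (ℕ → ℕ) → (ℕ → ℕ) := fun x n => x (n + 1)

/-- `Jσ^n(z) = ∏_{i<n} Jσ(σ^i z)`. -/
def jprod (J : (ℕ → ℕ) → ℝ) (n : ℕ) (z : ℕ → ℕ) : ℝ :=
  ∏ i ∈ Finset.range n, J (shiftMap^[i] z)

/-- The future projection `P : ℕ^ℤ → ℕ^ℕ`, `(P x̂)(n) = x̂(n)`. -/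
def futureProj : (ℤ → ℕ) → (ℕ → ℕ) := fun x n => x (n : ℤ)

/-- The past projection `S : ℕ^ℤ → ℕ^ℕ`, `(S x̂)(n) = x̂(−1−n)`. -/
def pastProj : (ℤ → ℕ) → (ℕ → ℕ) := fun x n => x (-1 - (n : ℤ))

/-- The homeomorphism `h = (S, P) : ℕ^ℤ → ℕ^ℕ × ℕ^ℕ`. -/
def pastFuture : (ℤ → ℕ) → (ℕ → ℕ) × (ℕ → ℕ) := fun x => (pastProj x, futureProj x)

/-- The two-sided shift on `Σ̂ = ℕ^ℤ`. -/
def shiftMap2 : (ℤ → ℕ) → (ℤ → ℕ) := fun x n => x (n + 1)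

/-- `x^n`: prepend the reversal of a word `v` of length `n` to `x`. -/
def prependWord {n : ℕ} (v : Fin n → ℕ) (x : ℕ → ℕ) : ℕ → ℕ :=
  fun j => if h : j < n then v ⟨n - 1 - j, by omega⟩ else x (j - n)

open scoped ENNReal

section SetLIntegral

variable {α : Type*} [MeasurableSpace α] {μ : Measure α}

theorem ae_le_of_forall_setLIntegral_eq [SigmaFinite μ] {f g : α → ℝ≥0∞} (hg : Measurable g)
    (hg_fin : ∫⁻ x, g x ∂μ ≠ ∞)
    (h : ∀ s, MeasurableSet s → ∫⁻ x in s, f x ∂μ = ∫⁻ x in s, g x ∂μ) :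
    ∀ᵐ x ∂μ, g x ≤ f x := by
  obtain ⟨u, hu, huf, hfu⟩ := exists_measurable_le_lintegral_eq μ f
  have hug : u ≤ᵐ[μ] g := ae_le_of_forall_setLIntegral_le_of_sigmaFinite hu fun s hs _ =>
    (lintegral_mono fun x => huf x).trans (h s hs).le
  have hgu : ∫⁻ x, g x ∂μ = ∫⁻ x, u x ∂μ := by
    simpa [← hfu] using (h Set.univ MeasurableSet.univ).symm
  filter_upwards [ae_eq_of_ae_le_of_lintegral_le hug (hgu ▸ hg_fin) hg.aemeasurable hgu.le]
    with x hx
  exact hx ▸ huf x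

/-- `f` need not be measurable, so `hcompl` does not follow from `h`; it is what bounds `f`
from above. -/
theorem ae_eq_of_forall_setLIntegral_eq_of_le_one [IsFiniteMeasure μ] {f g : α → ℝ≥0∞}
    (hf : ∀ x, f x ≤ 1) (hg : Measurable g)
    (h : ∀ s, MeasurableSet s → ∫⁻ x in s, f x ∂μ = ∫⁻ x in s, g x ∂μ)
    (hcompl : ∀ s, MeasurableSet s → ∫⁻ x in s, (1 - f x) ∂μ + ∫⁻ x in s, f x ∂μ = μ s) :
    f =ᵐ[μ] g := by
  have hf_fin : ∀ s, ∫⁻ x in s, f x ∂μ ≠ ∞ := fun s =>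
    ne_top_of_le_ne_top (measure_ne_top μ s)
      ((lintegral_mono fun x => hf x).trans_eq (setLIntegral_one s))
  have hgf : ∀ᵐ x ∂μ, g x ≤ f x :=
    ae_le_of_forall_setLIntegral_eq hg
      (by rw [← setLIntegral_univ, ← h _ MeasurableSet.univ]; exact hf_fin _) h
  have hg_le : ∀ᵐ x ∂μ, g x ≤ 1 := hgf.mono fun x hx => hx.trans (hf x)
  have hcompl' : ∀ s, MeasurableSet s →
      ∫⁻ x in s, (1 - f x) ∂μ = ∫⁻ x in s, (1 - g x) ∂μ := fun s hs => by
    rw [lintegral_sub hg (h s hs ▸ hf_fin s) (ae_restrict_of_ae hg_le), setLIntegral_one,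
      ← h s hs]
    exact ENNReal.eq_sub_of_add_eq (hf_fin s) (hcompl s hs)
  have hfg : ∀ᵐ x ∂μ, 1 - g x ≤ 1 - f x :=
    ae_le_of_forall_setLIntegral_eq (measurable_const.sub hg)
      (ne_top_of_le_ne_top (measure_ne_top μ Set.univ)
        ((lintegral_mono fun x => tsub_le_self).trans_eq (lintegral_one))) hcompl'
  filter_upwards [hgf, hg_le, hfg] with x hgf hg_le hfg
  exact le_antisymm ((ENNReal.sub_le_sub_iff_left (hf x) ENNReal.one_ne_top).1 hfg) hgf

end SetLIntegral

theorem measure_prod_eq_setLIntegral {X Y : Type*} [MeasurableSpace X] [MeasurableSpace Y]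
    {ρ : Measure (X × Y)} {μ : Measure Y} {ν : Y → Measure X}
    (hdisint : ∀ E, MeasurableSet E → ρ E = ∫⁻ y, ν y {x | (x, y) ∈ E} ∂μ)
    {A : Set X} {B : Set Y} (hA : MeasurableSet A) (hB : MeasurableSet B) :
    ρ (A ×ˢ B) = ∫⁻ y in B, ν y A ∂μ := by
  rw [hdisint _ (hA.prod hB), ← lintegral_indicator hB]
  congr 1
  funext y
  by_cases hy : y ∈ B <;> simp [hy]

theorem measurable_shiftMap : Measurable shiftMap :=
  measurable_pi_lambda _ fun _ => measurable_pi_apply _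

theorem measurable_futureProj : Measurable futureProj :=
  measurable_pi_lambda _ fun _ => measurable_pi_apply _

theorem measurable_pastFuture : Measurable pastFuture :=
  (measurable_pi_lambda _ fun _ => measurable_pi_apply _).prodMk measurable_futureProj

theorem measurableSet_cylinder_zero (a : ℕ) : MeasurableSet {y : ℕ → ℕ | y 0 = a} :=
  (measurableSet_singleton a).preimage (measurable_pi_apply 0)

theorem iterate_shiftMap_apply (n : ℕ) (x : ℕ → ℕ) (m : ℕ) :
    shiftMap^[n] x m = x (m + n) := by
  induction n generalizing x with
  | zero => rfl
  | succ n ih => rw [Function.iterate_succ_apply, ih]; simp only [shiftMap]; ring_nf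

theorem iterate_shiftMap2_apply (n : ℕ) (x : ℤ → ℕ) (m : ℤ) :
    shiftMap2^[n] x m = x (m + n) := by
  induction n generalizing x with
  | zero => simp
  | succ n ih => rw [Function.iterate_succ_apply, ih]; simp only [shiftMap2]; push_cast; ring_nf

theorem futureProj_iterate_shiftMap2 (n : ℕ) (z : ℤ → ℕ) :
    futureProj (shiftMap2^[n] z) = shiftMap^[n] (futureProj z) := by
  funext m
  simp [futureProj, iterate_shiftMap_apply, iterate_shiftMap2_apply]

def consSeq (a : ℕ) (x : ℕ → ℕ) : ℕ → ℕ
  | 0 => a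
  | m + 1 => x m

theorem shiftMap_consSeq (a : ℕ) (x : ℕ → ℕ) : shiftMap (consSeq a x) = x := rfl

theorem consSeq_shiftMap (y : ℕ → ℕ) : consSeq (y 0) (shiftMap y) = y := by
  funext m; cases m <;> rfl

theorem image_consSeq (a : ℕ) (S : Set (ℕ → ℕ)) :
    consSeq a '' S = {y | y 0 = a} ∩ shiftMap ⁻¹' S := by
  ext y
  constructor
  · rintro ⟨x, hx, rfl⟩
    exact ⟨rfl, hx⟩
  · rintro ⟨rfl, hy⟩
    exact ⟨shiftMap y, hy, consSeq_shiftMap y⟩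

theorem measurableEmbedding_consSeq (a : ℕ) :
    MeasurableEmbedding (consSeq a) where
  injective x y h := congrArg shiftMap h
  measurable := measurable_pi_lambda _ fun
    | 0 => measurable_const
    | m + 1 => measurable_pi_apply m
  measurableSet_image' S hS := by
    rw [image_consSeq]
    exact (measurableSet_cylinder_zero a).inter (measurable_shiftMap hS)

theorem prependWord_zero (v : Fin 0 → ℕ) : prependWord v = id := by
  funext x m
  simp [prependWord]

theorem prependWord_succ {n : ℕ} (v : Fin (n + 1) → ℕ) :
    prependWord v = prependWord (Fin.tail v) ∘ consSeq (v 0) := by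
  funext x j
  simp only [prependWord, Function.comp_apply, Fin.tail]
  rcases lt_trichotomy j n with hj | rfl | hj
  · rw [dif_pos (by omega), dif_pos hj]
    congr 1
    ext
    simp only [Fin.val_succ]
    omega
  · simp [consSeq]
  · rw [dif_neg (by omega), dif_neg (by omega)]
    obtain ⟨m, rfl⟩ := Nat.exists_eq_add_of_lt hj
    simp [consSeq, show n + m + 1 - (n + 1) = m by omega, show n + m + 1 - n = m + 1 by omega]

theorem iterate_shiftMap_prependWord {n : ℕ} (v : Fin n → ℕ) (x : ℕ → ℕ) :
    shiftMap^[n] (prependWord v x) = x := by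
  funext m
  simp [iterate_shiftMap_apply, prependWord]

theorem measurableEmbedding_prependWord {n : ℕ} (v : Fin n → ℕ) :
    MeasurableEmbedding (prependWord v) := by
  induction n with
  | zero => simpa [prependWord_zero] using MeasurableEmbedding.id
  | succ n ih =>
    rw [prependWord_succ]
    exact (ih _).comp (measurableEmbedding_consSeq _)

theorem mem_image_prependWord {n : ℕ} {v : Fin n → ℕ} {B : Set (ℕ → ℕ)} {y : ℕ → ℕ} :
    y ∈ prependWord v '' B ↔ (∀ k : Fin n, y (n - 1 - k) = v k) ∧ shiftMap^[n] y ∈ B := by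
  constructor
  · rintro ⟨x, hx, rfl⟩
    refine ⟨fun k => ?_, by rwa [iterate_shiftMap_prependWord]⟩
    simp only [prependWord, dif_pos (show n - 1 - k < n by omega)]
    congr 1
    ext
    simp only
    omega
  · rintro ⟨hy, hB⟩
    refine ⟨_, hB, funext fun j => ?_⟩
    simp only [prependWord, iterate_shiftMap_apply]
    split_ifs with hj
    · rw [← hy]
      congr 1
      simp only
      omega
    · congr 1
      omega

theorem jprod_succ (J : (ℕ → ℕ) → ℝ) (n : ℕ) (z : ℕ → ℕ) :
    jprod J (n + 1) z = jprod J n z * J (shiftMap^[n] z) :=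
  Finset.prod_range_succ _ _

theorem jprod_pos {J : (ℕ → ℕ) → ℝ} (hJ : ∀ x, 0 < J x) (n : ℕ) (z : ℕ → ℕ) :
    0 < jprod J n z :=
  Finset.prod_pos fun _ _ => hJ _

theorem measurable_jprod {J : (ℕ → ℕ) → ℝ} (hJ : Measurable J) (n : ℕ) :
    Measurable (jprod J n) :=
  Finset.measurable_prod _ fun i _ => hJ.comp (measurable_shiftMap.iterate i)

structure IsShiftJacobian (μ : Measure (ℕ → ℕ)) (J : (ℕ → ℕ) → ℝ) : Prop where
  measurable : Measurable J
  pos : ∀ x, 0 < J x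
  measure_eq : ∀ (ι : ℕ) (B : Set (ℕ → ℕ)), MeasurableSet B →
    μ B = ∫⁻ x in {y : ℕ → ℕ | y 0 = ι} ∩ shiftMap ⁻¹' B, ENNReal.ofReal (J x) ∂μ

namespace IsShiftJacobian

variable {μ : Measure (ℕ → ℕ)} {J : (ℕ → ℕ) → ℝ}

theorem map_shiftMap_restrict (hJ : IsShiftJacobian μ J) (a : ℕ) :
    ((μ.withDensity fun y => ENNReal.ofReal (J y)).restrict {y | y 0 = a}).map shiftMap = μ := by
  ext B hB
  rw [Measure.map_apply measurable_shiftMap hB, Measure.restrict_apply (measurable_shiftMap hB),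
    withDensity_apply _ ((measurable_shiftMap hB).inter (measurableSet_cylinder_zero a)),
    Set.inter_comm, hJ.measure_eq a B hB]

theorem setLIntegral_image_consSeq (hJ : IsShiftJacobian μ J) (a : ℕ) {S : Set (ℕ → ℕ)}
    (hS : MeasurableSet S) {F : (ℕ → ℕ) → ℝ≥0∞} (hF : Measurable F) :
    ∫⁻ y in consSeq a '' S, F y ∂μ
      = ∫⁻ x in S, F (consSeq a x) * (ENNReal.ofReal (J (consSeq a x)))⁻¹ ∂μ := by
  have hcons := (measurableEmbedding_consSeq a).measurable
  have hj : Measurable fun y => ENNReal.ofReal (J y) := hJ.measurable.ennreal_ofReal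
  set G := fun x => F (consSeq a x) * (ENNReal.ofReal (J (consSeq a x)))⁻¹
  have hG : Measurable G := (hF.comp hcons).mul (hj.comp hcons).inv
  conv_rhs => rw [← hJ.map_shiftMap_restrict a]
  rw [setLIntegral_map hS hG measurable_shiftMap,
    Measure.restrict_restrict (measurable_shiftMap hS),
    setLIntegral_withDensity_eq_setLIntegral_mul (g := fun x => G (shiftMap x)) _ hj
      (hG.comp measurable_shiftMap)
      ((measurable_shiftMap hS).inter (measurableSet_cylinder_zero a)),
    Set.inter_comm, ← image_consSeq]
  refine setLIntegral_congr_fun ((measurableEmbedding_consSeq a).measurableSet_image' hS) ?_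
  rintro _ ⟨x, -, rfl⟩
  simp only [Pi.mul_apply, shiftMap_consSeq]
  rw [mul_comm, mul_assoc, ENNReal.inv_mul_cancel (ENNReal.ofReal_pos.2 (hJ.pos _)).ne'
    ENNReal.ofReal_ne_top, mul_one]

theorem setLIntegral_image_prependWord (hJ : IsShiftJacobian μ J) {n : ℕ} (v : Fin n → ℕ)
    {S : Set (ℕ → ℕ)} (hS : MeasurableSet S) {F : (ℕ → ℕ) → ℝ≥0∞} (hF : Measurable F) :
    ∫⁻ y in prependWord v '' S, F y ∂μ
      = ∫⁻ x in S, F (prependWord v x) * (ENNReal.ofReal (jprod J n (prependWord v x)))⁻¹ ∂μ := by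
  induction n generalizing S F with
  | zero => simp [prependWord_zero, jprod]
  | succ n ih =>
    have hv := (measurableEmbedding_prependWord (Fin.tail v)).measurable
    rw [prependWord_succ, Set.image_comp,
      ih _ ((measurableEmbedding_consSeq _).measurableSet_image' hS) hF,
      hJ.setLIntegral_image_consSeq (F := fun y => F (prependWord (Fin.tail v) y) *
        (ENNReal.ofReal (jprod J n (prependWord (Fin.tail v) y)))⁻¹) _ hS (hF.comp hv |>.mul ((measurable_jprod hJ.measurable n).comp hv).ennreal_ofReal.inv)]
    refine lintegral_congr fun x => ?_
    rw [Function.comp_apply, jprod_succ, iterate_shiftMap_prependWord,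
      ENNReal.ofReal_mul (jprod_pos hJ.pos n _).le,
      ENNReal.mul_inv (Or.inr ENNReal.ofReal_ne_top) (Or.inl ENNReal.ofReal_ne_top), mul_assoc]

theorem measure_image_prependWord (hJ : IsShiftJacobian μ J) {n : ℕ} (v : Fin n → ℕ)
    {B : Set (ℕ → ℕ)} (hB : MeasurableSet B) :
    μ (prependWord v '' B) = ∫⁻ x in B, (ENNReal.ofReal (jprod J n (prependWord v x)))⁻¹ ∂μ := by
  simpa using hJ.setLIntegral_image_prependWord v hB measurable_const (F := 1)

end IsShiftJacobian

def cylinderSet {n : ℕ} (v : Fin n → ℕ) : Set (ℕ → ℕ) := {s | ∀ k : Fin n, s k = v k}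

theorem measurableSet_cylinderSet {n : ℕ} (v : Fin n → ℕ) : MeasurableSet (cylinderSet v) := by
  rw [cylinderSet, Set.ofPred_forall]
  exact MeasurableSet.iInter fun k =>
    (measurableSet_singleton (v k)).preimage (measurable_pi_apply _)

theorem preimage_iterate_shiftMap2_pastFuture {n : ℕ} (v : Fin n → ℕ) (B : Set (ℕ → ℕ)) :
    shiftMap2^[n] ⁻¹' (pastFuture ⁻¹' (cylinderSet v ×ˢ B))
      = futureProj ⁻¹' (prependWord v '' B) := by
  ext z
  simp only [Set.mem_preimage, mem_image_prependWord, pastFuture, Set.mem_prod, cylinderSet,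
    Set.mem_ofPred_eq, pastProj, futureProj_iterate_shiftMap2, iterate_shiftMap2_apply]
  refine and_congr_left' (forall_congr' fun k => ?_)
  simp only [futureProj]
  congr! 2
  omega

theorem map_pastFuture_cylinderSet_prod {μ : Measure (ℕ → ℕ)} {μhat : Measure (ℤ → ℕ)}
    (hinv2 : MeasurePreserving shiftMap2 μhat μhat) (hproj : μhat.map futureProj = μ)
    {n : ℕ} (v : Fin n → ℕ) {B : Set (ℕ → ℕ)} (hB : MeasurableSet B) :
    μhat.map pastFuture (cylinderSet v ×ˢ B) = μ (prependWord v '' B) := by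
  have hE := (measurableSet_cylinderSet v).prod hB
  rw [Measure.map_apply measurable_pastFuture hE,
    ← (hinv2.iterate n).measure_preimage (measurable_pastFuture hE).nullMeasurableSet,
    preimage_iterate_shiftMap2_pastFuture, ← hproj,
    Measure.map_apply measurable_futureProj
      ((measurableEmbedding_prependWord v).measurableSet_image' hB)]

theorem ae_measure_cylinderSet_eq {μ : Measure (ℕ → ℕ)} [IsFiniteMeasure μ]
    {J : (ℕ → ℕ) → ℝ} (hJ : IsShiftJacobian μ J) {μhat : Measure (ℤ → ℕ)}
    (hinv2 : MeasurePreserving shiftMap2 μhat μhat) (hproj : μhat.map futureProj = μ)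
    {ν : (ℕ → ℕ) → Measure (ℕ → ℕ)} [∀ x, IsProbabilityMeasure (ν x)]
    (hdisint : ∀ E : Set ((ℕ → ℕ) × (ℕ → ℕ)), MeasurableSet E →
      μhat.map pastFuture E = ∫⁻ x, ν x {s | (s, x) ∈ E} ∂μ)
    {n : ℕ} (v : Fin n → ℕ) :
    ∀ᵐ x ∂μ, ν x (cylinderSet v) = (ENNReal.ofReal (jprod J n (prependWord v x)))⁻¹ := by
  have hC := measurableSet_cylinderSet v
  have hprod {A : Set (ℕ → ℕ)} (hA : MeasurableSet A) {B : Set (ℕ → ℕ)} (hB : MeasurableSet B) :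
      ∫⁻ x in B, ν x A ∂μ = μhat.map pastFuture (A ×ˢ B) :=
    (measure_prod_eq_setLIntegral hdisint hA hB).symm
  refine ae_eq_of_forall_setLIntegral_eq_of_le_one (fun x => prob_le_one)
    ((measurable_jprod hJ.measurable n).comp
      (measurableEmbedding_prependWord v).measurable).ennreal_ofReal.inv
    (fun B hB => ?_) (fun B hB => ?_)
  · rw [hprod hC hB, map_pastFuture_cylinderSet_prod hinv2 hproj v hB,
      hJ.measure_image_prependWord v hB]
  · simp_rw [← prob_compl_eq_one_sub hC]
    rw [hprod hC.compl hB, hprod hC hB,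
      ← measure_union (Set.disjoint_prod.2 (Or.inl disjoint_compl_left)) (hC.prod hB),
      ← Set.union_prod, Set.compl_union_self, ← hprod MeasurableSet.univ hB]
    simp

theorem stmt12_general (μ : Measure (ℕ → ℕ)) [IsProbabilityMeasure μ]
    (J : (ℕ → ℕ) → ℝ) (hJmeas : Measurable J) (hJpos : ∀ x, 0 < J x)
    (hJac : ∀ (ι : ℕ) (B : Set (ℕ → ℕ)), MeasurableSet B →
      μ B = ∫⁻ x in {y : ℕ → ℕ | y 0 = ι} ∩ shiftMap ⁻¹' B, ENNReal.ofReal (J x) ∂μ)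
    (μhat : Measure (ℤ → ℕ))
    (hinv2 : MeasurePreserving shiftMap2 μhat μhat)
    (hproj : Measure.map futureProj μhat = μ)
    (ν : (ℕ → ℕ) → Measure (ℕ → ℕ)) (hνprob : ∀ x, IsProbabilityMeasure (ν x))
    (hdisint : ∀ E : Set ((ℕ → ℕ) × (ℕ → ℕ)), MeasurableSet E →
      Measure.map pastFuture μhat E = ∫⁻ x, ν x {s | (s, x) ∈ E} ∂μ) :
    ∀ᵐ x ∂μ, ∀ n : ℕ, 1 ≤ n → ∀ v : Fin n → ℕ,
      ν x {s : ℕ → ℕ | ∀ k : Fin n, s (k : ℕ) = v k}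
        = ENNReal.ofReal (1 / jprod J n (prependWord v x)) := by
  have hJ : IsShiftJacobian μ J := ⟨hJmeas, hJpos, hJac⟩
  have hcyl : ∀ᵐ x ∂μ, ∀ n (v : Fin n → ℕ),
      ν x (cylinderSet v) = (ENNReal.ofReal (jprod J n (prependWord v x)))⁻¹ :=
    ae_all_iff.2 fun _ => ae_all_iff.2 fun v => ae_measure_cylinderSet_eq hJ hinv2 hproj hdisint v
  filter_upwards [hcyl] with x hx n _ v
  rw [one_div, ENNReal.ofReal_inv_of_pos (jprod_pos hJpos n _)]
  exact hx n v

/-- **Lemma A.3.** Let `μ` be a shift-invariant probability on `ℕ^ℕ` with Jacobian `Jσ`,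
and `μ̂` a shift-invariant lift on `ℕ^ℤ` with `P_*μ̂ = μ`. If `(μ̂_x)` is a disintegration
of `μ̂` over `μ` along `P`, then for `μ`-a.e. `x`, for every word `v` of length `n ≥ 1`,
`μ̂_x([v]) = 1/Jσ^n(x^n)` where `x^n` prepends the reversal of `v` to `x`. -/
theorem stmt12 (μ : Measure (ℕ → ℕ)) [IsProbabilityMeasure μ]
    (hinv : MeasurePreserving shiftMap μ μ)
    (J : (ℕ → ℕ) → ℝ) (hJmeas : Measurable J) (hJpos : ∀ x, 0 < J x)
    (hJac : ∀ (ι : ℕ) (B : Set (ℕ → ℕ)), MeasurableSet B →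
      μ B = ∫⁻ x in {y : ℕ → ℕ | y 0 = ι} ∩ shiftMap ⁻¹' B, ENNReal.ofReal (J x) ∂μ)
    (μhat : Measure (ℤ → ℕ)) [IsProbabilityMeasure μhat]
    (hinv2 : MeasurePreserving shiftMap2 μhat μhat)
    (hproj : Measure.map futureProj μhat = μ)
    (ν : (ℕ → ℕ) → Measure (ℕ → ℕ)) (hνprob : ∀ x, IsProbabilityMeasure (ν x))
    (hdisint : ∀ E : Set ((ℕ → ℕ) × (ℕ → ℕ)), MeasurableSet E →
      Measure.map pastFuture μhat E = ∫⁻ x, ν x {s | (s, x) ∈ E} ∂μ) :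
    ∀ᵐ x ∂μ, ∀ n : ℕ, 1 ≤ n → ∀ v : Fin n → ℕ,
      ν x {s : ℕ → ℕ | ∀ k : Fin n, s (k : ℕ) = v k}
        = ENNReal.ofReal (1 / jprod J n (prependWord v x)) :=
  stmt12_general μ J hJmeas hJpos hJac μhat hinv2 hproj ν hνprob hdisint
end
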